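/- Let n ≥ 2 and let E be a (2,3)-sparse edge set on the vertex set Fin n that is maximal among (2,3)-sparse edge sets, i.e., no (2,3)-sparse edge set on Fin n strictly contains E. Then |E| = 2n − 3. -/

import Mathlib

/-!
Call a nonempty `T ⊆ E` tight if `|T| = 2|V(T)| - 3`. By maximality every pair of vertices `u ≠ v`
lies in the span of a tight set: either `uv ∈ E`, or adding `uv` creates a violating set, which
minus `uv` is tight. By inclusion–exclusion, with sparsity bounding the common edges, two tight
sets whose spans share two vertices have a tight union; so do three tight sets whose spans meet
pairwise in three distinct single vertices. Hence a tight set of largest span spans all `n`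
vertices, and then `2n - 3 ≤ |E| ≤ 2|V(E)| - 3 ≤ 2n - 3`.
-/

open Finset

variable {V : Type*} [Fintype V] [DecidableEq V]

/-- An edge set: a finite set of unordered pairs of distinct vertices (no loops). -/
def IsEdgeSet (E : Finset (Sym2 V)) : Prop := ∀ e ∈ E, ¬ e.IsDiag

/-- The vertex span `V(E)`: vertices incident to at least one edge of `E`. -/
def vertexSpan (E : Finset (Sym2 V)) : Finset V :=
  Finset.univ.filter fun v => ∃ e ∈ E, v ∈ e

/-- `(2,3)`-sparsity: every nonempty subset `E' ⊆ E` has `|E'| ≤ 2|V(E')| - 3`. -/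
def Sparse23 (E : Finset (Sym2 V)) : Prop :=
  ∀ E' ⊆ E, E'.Nonempty → (E'.card : ℤ) ≤ 2 * (vertexSpan E').card - 3

/-- An edge set is dependent if it is not `(2,3)`-sparse. -/
def DependentES (E : Finset (Sym2 V)) : Prop := ¬ Sparse23 E

/-- A rigidity circuit: a dependent edge set all of whose proper subsets are `(2,3)`-sparse. -/
def IsRigidityCircuit (E : Finset (Sym2 V)) : Prop :=
  IsEdgeSet E ∧ DependentES E ∧ ∀ E' ⊂ E, Sparse23 E'

variable {E A B C : Finset (Sym2 V)}

@[simp]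
lemma mem_vertexSpan {v : V} : v ∈ vertexSpan E ↔ ∃ e ∈ E, v ∈ e := by
  simp [vertexSpan]

lemma vertexSpan_mono (h : A ⊆ B) : vertexSpan A ⊆ vertexSpan B := by
  intro v
  simp only [mem_vertexSpan]
  exact fun ⟨e, he, hv⟩ => ⟨e, h he, hv⟩

lemma vertexSpan_union : vertexSpan (A ∪ B) = vertexSpan A ∪ vertexSpan B := by
  ext v
  simp only [mem_vertexSpan, mem_union, or_and_right, exists_or]

lemma vertexSpan_inter_subset : vertexSpan (A ∩ B) ⊆ vertexSpan A ∩ vertexSpan B :=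
  subset_inter (vertexSpan_mono inter_subset_left) (vertexSpan_mono inter_subset_right)

lemma vertexSpan_singleton (u v : V) : vertexSpan {s(u, v)} = {u, v} := by
  ext x
  simp [Sym2.mem_iff]

lemma IsEdgeSet.two_le_card_vertexSpan (hE : IsEdgeSet E) (hne : E.Nonempty) :
    2 ≤ #(vertexSpan E) := by
  obtain ⟨e, he⟩ := hne
  induction e using Sym2.ind with
  | _ a b =>
    have hab : a ≠ b := fun h => hE _ he (by simp [h])
    calc 2 = #{a, b} := (card_pair hab).symm
      _ ≤ #(vertexSpan E) := by
        rw [← vertexSpan_singleton]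
        exact card_le_card (vertexSpan_mono (by simpa))

lemma IsEdgeSet.disjoint_of_card_inter_vertexSpan_le_one (hA : IsEdgeSet A)
    (h : #(vertexSpan A ∩ vertexSpan B) ≤ 1) : Disjoint A B := by
  rw [disjoint_iff_inter_eq_empty, ← not_nonempty_iff_eq_empty]
  intro hne
  have := IsEdgeSet.two_le_card_vertexSpan (fun e he => hA e (mem_of_mem_inter_left he)) hne
  have := card_le_card (vertexSpan_inter_subset (A := A) (B := B))
  omega

def defect (A : Finset (Sym2 V)) : ℤ := 2 * #(vertexSpan A) - 3 - #A

lemma defect_union_add :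
    defect (A ∪ B) + 2 * #(vertexSpan A ∩ vertexSpan B) = defect A + defect B + 3 + #(A ∩ B) := by
  have hE := card_union_add_card_inter A B
  have hV := card_union_add_card_inter (vertexSpan A) (vertexSpan B)
  rw [← vertexSpan_union] at hV
  simp only [defect]
  omega

lemma defect_singleton {u v : V} (huv : u ≠ v) : defect {s(u, v)} = 0 := by
  simp [defect, vertexSpan_singleton, card_pair huv]

lemma Sparse23.defect_nonneg (hs : Sparse23 E) (hA : A ⊆ E) (hne : A.Nonempty) : 0 ≤ defect A := by
  have := hs A hA hne
  simp only [defect]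
  omega

def IsTightSubset (E T : Finset (Sym2 V)) : Prop :=
  T ⊆ E ∧ T.Nonempty ∧ defect T = 0

lemma Sparse23.isTightSubset_union (hs : Sparse23 E) (hA : IsTightSubset E A)
    (hB : IsTightSubset E B) (h2 : 2 ≤ #(vertexSpan A ∩ vertexSpan B)) :
    IsTightSubset E (A ∪ B) := by
  have hU : A ∪ B ⊆ E := union_subset hA.1 hB.1
  have hUne : (A ∪ B).Nonempty := hA.2.1.mono subset_union_left
  have hI : (#(A ∩ B) : ℤ) ≤ 2 * #(vertexSpan A ∩ vertexSpan B) - 3 := by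
    rcases (A ∩ B).eq_empty_or_nonempty with h | h
    · rw [h, card_empty]; push_cast; omega
    · have hsp := hs _ (inter_subset_left.trans hA.1) h
      have hV := card_le_card (vertexSpan_inter_subset (A := A) (B := B))
      omega
  have hdU := hs.defect_nonneg hU hUne
  have hdUI := defect_union_add (A := A) (B := B)
  exact ⟨hU, hUne, by linarith [hA.2.2, hB.2.2]⟩

lemma IsEdgeSet.isTightSubset_union_union (hE : IsEdgeSet E)
    (hA : IsTightSubset E A) (hB : IsTightSubset E B) (hC : IsTightSubset E C)
    (hAB : #(vertexSpan A ∩ vertexSpan B) = 1) (hAC : #(vertexSpan A ∩ vertexSpan C) = 1)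
    (hBC : #(vertexSpan B ∩ vertexSpan C) = 1)
    (hABC : vertexSpan A ∩ vertexSpan B ∩ vertexSpan C = ∅) :
    IsTightSubset E (A ∪ B ∪ C) := by
  have hEdges : ∀ {X}, X ⊆ E → IsEdgeSet X := fun hX e he => hE e (hX he)
  have hdAB : A ∩ B = ∅ := disjoint_iff_inter_eq_empty.1 <|
    (hEdges hA.1).disjoint_of_card_inter_vertexSpan_le_one hAB.le
  have hdC : (A ∪ B) ∩ C = ∅ := by
    rw [union_inter_distrib_right, disjoint_iff_inter_eq_empty.1 <|
      (hEdges hA.1).disjoint_of_card_inter_vertexSpan_le_one hAC.le,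
      disjoint_iff_inter_eq_empty.1 <|
      (hEdges hB.1).disjoint_of_card_inter_vertexSpan_le_one hBC.le, union_empty]
  have hV : #(vertexSpan (A ∪ B) ∩ vertexSpan C) = 2 := by
    rw [vertexSpan_union, union_inter_distrib_right, card_union_of_disjoint, hAC, hBC]
    rw [disjoint_iff_inter_eq_empty, ← subset_empty, ← hABC]
    intro x
    simp only [mem_inter]
    tauto
  have h1 := defect_union_add (A := A) (B := B)
  have h2 := defect_union_add (A := A ∪ B) (B := C)
  rw [hdAB, hAB] at h1
  rw [hdC, hV] at h2
  refine ⟨union_subset (union_subset hA.1 hB.1) hC.1, hC.2.1.mono subset_union_right, ?_⟩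
  simp only [card_empty, Nat.cast_zero, Nat.cast_one, Nat.cast_ofNat] at h1 h2
  linarith [hA.2.2, hB.2.2, hC.2.2]

variable (E) in
def TightlyLinked : Prop :=
  ∀ u v : V, u ≠ v → ∃ T, IsTightSubset E T ∧ u ∈ vertexSpan T ∧ v ∈ vertexSpan T

lemma Sparse23.exists_isTightSubset_of_not_sparse23_insert (hs : Sparse23 E) {u v : V}
    (huv : u ≠ v) (hins : ¬ Sparse23 (insert s(u, v) E)) :
    ∃ T, IsTightSubset E T ∧ u ∈ vertexSpan T ∧ v ∈ vertexSpan T := by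
  simp only [Sparse23, not_forall, not_le, exists_prop] at hins
  obtain ⟨F, hF, hFne, hFlt⟩ := hins
  have hdF : defect F < 0 := by simp only [defect]; omega
  have heF : s(u, v) ∈ F := by
    by_contra he
    have := hs F ((subset_insert_iff_of_notMem he).1 hF) hFne
    omega
  set T := F.erase s(u, v)
  have hTE : T ⊆ E := subset_insert_iff.1 hF
  have hTne : T.Nonempty := by
    rw [nonempty_iff_ne_empty, Ne, erase_eq_empty_iff]
    rintro (rfl | rfl)
    · exact not_nonempty_empty hFne
    · exact hdF.ne (defect_singleton huv)
  have hVT : vertexSpan T ⊆ vertexSpan F := vertexSpan_mono (erase_subset _ _)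
  have hcard : #T + 1 = #F := card_erase_add_one heF
  have hdT := hs.defect_nonneg hTE hTne
  have hVle := card_le_card hVT
  simp only [defect] at hdF hdT
  have hVeq : vertexSpan T = vertexSpan F := eq_of_subset_of_card_le hVT (by omega)
  refine ⟨T, ⟨hTE, hTne, by simp only [defect]; omega⟩, ?_⟩
  rw [hVeq]
  exact ⟨mem_vertexSpan.2 ⟨_, heF, Sym2.mem_mk_left u v⟩,
    mem_vertexSpan.2 ⟨_, heF, Sym2.mem_mk_right u v⟩⟩

lemma IsEdgeSet.tightlyLinked_of_maximal (hE : IsEdgeSet E) (hs : Sparse23 E)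
    (hmax : ∀ E' : Finset (Sym2 V), IsEdgeSet E' → Sparse23 E' → ¬ E ⊂ E') :
    TightlyLinked E := by
  intro u v huv
  by_cases he : s(u, v) ∈ E
  · refine ⟨{s(u, v)}, ⟨singleton_subset_iff.2 he, singleton_nonempty _, defect_singleton huv⟩, ?_⟩
    simp [vertexSpan_singleton]
  · have hins : IsEdgeSet (insert s(u, v) E) := by
      simpa [IsEdgeSet, forall_mem_insert, huv] using hE
    exact hs.exists_isTightSubset_of_not_sparse23_insert huv
      fun h => hmax _ hins h (ssubset_insert he)

lemma Sparse23.exists_isTightSubset_card_vertexSpan_lt (hE : IsEdgeSet E) (hs : Sparse23 E)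
    (hlink : TightlyLinked E) {T : Finset (Sym2 V)} (hT : IsTightSubset E T) {w : V}
    (hw : w ∉ vertexSpan T) :
    ∃ T', IsTightSubset E T' ∧ #(vertexSpan T) < #(vertexSpan T') := by
  have hT2 := IsEdgeSet.two_le_card_vertexSpan (fun e he => hE e (hT.1 he)) hT.2.1
  obtain ⟨u, hu, v, hv, huv⟩ := one_lt_card.1 hT2
  obtain ⟨Y, hY, huY, hwY⟩ := hlink u w (ne_of_mem_of_not_mem hu hw)
  obtain ⟨Z, hZ, hvZ, hwZ⟩ := hlink v w (ne_of_mem_of_not_mem hv hw)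
  have hgrow : ∀ X, w ∈ vertexSpan X → IsTightSubset E (T ∪ X) →
      ∃ T', IsTightSubset E T' ∧ #(vertexSpan T) < #(vertexSpan T') := fun X hwX hTX =>
    ⟨T ∪ X, hTX, card_lt_card <| (ssubset_iff_of_subset (vertexSpan_mono subset_union_left)).2
      ⟨w, vertexSpan_mono subset_union_right hwX, hw⟩⟩
  by_cases hTY : 2 ≤ #(vertexSpan T ∩ vertexSpan Y)
  · exact hgrow Y hwY (hs.isTightSubset_union hT hY hTY)
  by_cases hTZ : 2 ≤ #(vertexSpan T ∩ vertexSpan Z)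
  · exact hgrow Z hwZ (hs.isTightSubset_union hT hZ hTZ)
  by_cases hYZ : 2 ≤ #(vertexSpan Y ∩ vertexSpan Z)
  · refine hgrow (Y ∪ Z) (vertexSpan_mono subset_union_left hwY)
      (hs.isTightSubset_union hT (hs.isTightSubset_union hY hZ hYZ) ?_)
    calc 2 = #{u, v} := (card_pair huv).symm
      _ ≤ _ := card_le_card <| insert_subset_iff.2
        ⟨mem_inter.2 ⟨hu, vertexSpan_mono subset_union_left huY⟩,
          singleton_subset_iff.2 (mem_inter.2 ⟨hv, vertexSpan_mono subset_union_right hvZ⟩)⟩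
  -- the spans of `T`, `Y`, `Z` pairwise meet in the single vertices `u`, `v`, `w`
  push Not at hTY hTZ hYZ
  have hTY1 : #(vertexSpan T ∩ vertexSpan Y) = 1 := by
    have := card_pos.2 ⟨u, mem_inter.2 ⟨hu, huY⟩⟩; omega
  have hTZ1 : #(vertexSpan T ∩ vertexSpan Z) = 1 := by
    have := card_pos.2 ⟨v, mem_inter.2 ⟨hv, hvZ⟩⟩; omega
  have hYZ1 : #(vertexSpan Y ∩ vertexSpan Z) = 1 := by
    have := card_pos.2 ⟨w, mem_inter.2 ⟨hwY, hwZ⟩⟩; omega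
  have hTYZ : vertexSpan T ∩ vertexSpan Y ∩ vertexSpan Z = ∅ := by
    refine eq_empty_of_forall_notMem fun x hx => hw ?_
    rw [inter_assoc, mem_inter] at hx
    rw [← card_le_one.1 hYZ1.le x hx.2 w (mem_inter.2 ⟨hwY, hwZ⟩)]
    exact hx.1
  refine hgrow (Y ∪ Z) (vertexSpan_mono subset_union_left hwY) ?_
  rw [← union_assoc]
  exact hE.isTightSubset_union_union hT hY hZ hTY1 hTZ1 hYZ1 hTYZ

lemma Sparse23.exists_isTightSubset_vertexSpan_eq_univ (hE : IsEdgeSet E) (hs : Sparse23 E)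
    (hlink : TightlyLinked E) {T₀ : Finset (Sym2 V)} (hT₀ : IsTightSubset E T₀) :
    ∃ T, IsTightSubset E T ∧ vertexSpan T = univ := by
  classical
  obtain ⟨T, hTmem, hTmax⟩ := exists_max_image ({T ∈ E.powerset | IsTightSubset E T})
    (fun T => #(vertexSpan T)) ⟨T₀, mem_filter.2 ⟨mem_powerset.2 hT₀.1, hT₀⟩⟩
  have hT := (mem_filter.1 hTmem).2
  refine ⟨T, hT, eq_univ_of_forall fun w => ?_⟩
  by_contra hw
  obtain ⟨T', hT', hlt⟩ := hs.exists_isTightSubset_card_vertexSpan_lt hE hlink hT hw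
  exact hlt.not_ge (hTmax T' (mem_filter.2 ⟨mem_powerset.2 hT'.1, hT'⟩))

lemma Sparse23.card_eq_of_isTightSubset_vertexSpan_eq_univ (hs : Sparse23 E)
    {T : Finset (Sym2 V)} (hT : IsTightSubset E T) (hV : vertexSpan T = univ) :
    (#E : ℤ) = 2 * Fintype.card V - 3 := by
  have hTE := card_le_card hT.1
  have hEle := hs E Subset.rfl (hT.2.1.mono hT.1)
  have hVE := card_le_univ (vertexSpan E)
  have hdT := hT.2.2
  simp only [defect, hV, card_univ] at hdT
  omega

/-- A maximal `(2,3)`-sparse edge set on `Fin n`, `n ≥ 2`, has exactly `2n - 3` edges. -/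
theorem maximal_sparse_card (n : ℕ) (hn : 2 ≤ n) (E : Finset (Sym2 (Fin n)))
    (hE : IsEdgeSet E) (hs : Sparse23 E)
    (hmax : ∀ E' : Finset (Sym2 (Fin n)), IsEdgeSet E' → Sparse23 E' → ¬ E ⊂ E') :
    (E.card : ℤ) = 2 * (n : ℤ) - 3 := by
  have hlink := hE.tightlyLinked_of_maximal hs hmax
  obtain ⟨T₀, hT₀, -⟩ := hlink ⟨0, by omega⟩ ⟨1, by omega⟩ (by simp [Fin.ext_iff])
  obtain ⟨T, hT, hV⟩ := hs.exists_isTightSubset_vertexSpan_eq_univ hE hlink hT₀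
  simpa using hs.card_eq_of_isTightSubset_vertexSpan_eq_univ hT hV
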